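/- Let (μ, (c_k)) be scalar Gårding–Wightman data on X with associated operators J_k, J'_k on L²(X, μ; ℂ). Assume that μ̃, the pushforward of μ under x ↦ 1−x, is mutually absolutely continuous with μ, and that for every k ≥ 1, conj(c_k(1−x)) = (−1)^k · c_k(x) for μ-a.e. x. Then H^ℝ := {f ∈ L²(X, μ; ℂ) : conj(f(x)) = √((dμ̃/dμ)(x)) · f(1−x) for μ-a.e. x} is a closed real-linear subspace of L²(X, μ; ℂ), invariant under every J_k and every J'_k, satisfying H^ℝ ∩ i·H^ℝ = {0} and L²(X, μ; ℂ) = H^ℝ + i·H^ℝ; i.e. H^ℝ is an invariant real form. -/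

import Mathlib

/-!
Common setup: `GWX` is the compact abelian group `X = ∏_{k ≥ 1} {0,1}` of 0-1 sequences
(with componentwise addition mod 2 and the product σ-algebra, which is generated by the
sets `X_k = {x : x_k = 1}`).  The coordinate `i : ℕ` of `x : GWX` represents the paper's
coordinate `x_{i+1}`, so the Lean index `k : ℕ` corresponds to the paper's index `k + 1`
throughout; in particular the paper's sign `(-1)^k` becomes `(-1)^(k+1)` here.
-/

open MeasureTheory Complex Filter
open scoped ENNReal

noncomputable section

abbrev GWX : Type := ℕ → ZMod 2

/-- `δ_k`: the sequence with `1` in the `k`-th place (the paper's `(k+1)`-th place)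
and `0` elsewhere. -/
def gwDelta (k : ℕ) : GWX := fun i => if i = k then 1 else 0

/-- The componentwise complement `x ↦ 1 - x`. -/
def gwFlip (x : GWX) : GWX := fun i => 1 - x i

/-- The sign `(-1)^{x_1 + ⋯ + x_{k-1} + 1}` of the paper, for the paper's index `k + 1`. -/
def gwSign (k : ℕ) (x : GWX) : ℂ := (-1 : ℂ) ^ ((∑ i ∈ Finset.range k, (x i).val) + 1)

/-!
With `e x = 1 - x` and `w = √(dμ̃/dμ)`, the map `Θ f = w · conj (f ∘ e)` is a conjugate-linear
isometry of `L²(μ)` (the factor `w` compensates for the change of measure under `e`), and it is an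
involution because the chain rule for Radon–Nikodym derivatives gives `w · (w ∘ e) = 1`.
`H^ℝ` is the fixed-point set of `Θ`, hence a closed real subspace with `H^ℝ ∩ i H^ℝ = 0`, and
`f = (f + Θ f) / 2 + i · (-i (f - Θ f) / 2)` splits every `f`. Finally `Θ` commutes with every
`J_k` and `J'_k`: the chain rule for the commuting involutions `e` and `x ↦ x + δ_k` matches the
densities, and the hypothesis on `c_k (1 - x)` cancels the signs that `(-1)^{x_1+⋯+x_{k-1}}` and
`(-1)^{x_k}` pick up under `e`.
-/

open Function ComplexConjugate
open MeasureTheory.Measure (QuasiMeasurePreserving)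

section TwistedConjugation

variable {α : Type*} [MeasurableSpace α] {μ : Measure α} {e t : α → α}

def sqrtMapDensity (μ : Measure α) (e : α → α) (x : α) : ℝ :=
  Real.sqrt ((μ.map e).rnDeriv μ x).toReal

lemma measurable_sqrtMapDensity : Measurable (sqrtMapDensity μ e) :=
  (Measure.measurable_rnDeriv _ _).ennreal_toReal.sqrt

lemma enorm_sqrtMapDensity_mul_rpow_two {x : α} (hx : (μ.map e).rnDeriv μ x ≠ ∞) (z : ℂ) :
    ‖(sqrtMapDensity μ e x : ℂ) * z‖ₑ ^ (2 : ℝ) = (μ.map e).rnDeriv μ x * ‖z‖ₑ ^ (2 : ℝ) := by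
  rw [enorm_mul, ENNReal.mul_rpow_of_nonneg _ _ zero_le_two, ← ofReal_norm, Complex.norm_real,
    sqrtMapDensity, Real.norm_of_nonneg (Real.sqrt_nonneg _), ENNReal.rpow_two,
    ← ENNReal.ofReal_pow (Real.sqrt_nonneg _), Real.sq_sqrt ENNReal.toReal_nonneg,
    ENNReal.ofReal_toReal hx]

variable [SigmaFinite μ]

lemma sigmaFinite_map_of_involutive (ν : Measure α) [SigmaFinite ν] (hinv : Involutive e)
    (he : Measurable e) : SigmaFinite (ν.map e) :=
  (MeasurableEquiv.ofInvolutive e hinv he).sigmaFinite_map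

lemma rnDeriv_map_of_involutive {ν : Measure α} [SigmaFinite ν] (hν : ν ≪ μ)
    (hinv : Involutive t) (ht : QuasiMeasurePreserving t μ μ) :
    (ν.map t).rnDeriv μ =ᵐ[μ] fun x => ν.rnDeriv μ (t x) * (μ.map t).rnDeriv μ x := by
  have := sigmaFinite_map_of_involutive μ hinv ht.measurable
  have := sigmaFinite_map_of_involutive ν hinv ht.measurable
  have hemb := (MeasurableEquiv.ofInvolutive t hinv ht.measurable).measurableEmbedding
  have hpull : (fun x => (ν.map t).rnDeriv (μ.map t) (t (t x))) =ᵐ[μ]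
      fun x => ν.rnDeriv μ (t x) :=
    ht.ae_eq (hemb.rnDeriv_map ν μ)
  filter_upwards [hpull, Measure.rnDeriv_mul_rnDeriv (μ := ν.map t) (hν.map ht.measurable)]
    with x hx hchain
  rw [← hchain, Pi.mul_apply, ← hx, hinv x]

lemma rnDeriv_map_mul_rnDeriv_map_comp (hinv : Involutive e)
    (he : QuasiMeasurePreserving e μ μ) :
    ∀ᵐ x ∂μ, (μ.map e).rnDeriv μ x * (μ.map e).rnDeriv μ (e x) = 1 := by
  have := sigmaFinite_map_of_involutive μ hinv he.measurable
  have hee : (μ.map e).map e = μ := by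
    rw [Measure.map_map he.measurable he.measurable, hinv.comp_self, Measure.map_id]
  have h := rnDeriv_map_of_involutive he.absolutelyContinuous hinv he
  rw [hee] at h
  filter_upwards [h, μ.rnDeriv_self] with x hx hself
  rw [mul_comm, ← hx, hself]

lemma rnDeriv_map_mul_comm (hinv_e : Involutive e) (he : QuasiMeasurePreserving e μ μ)
    (hinv_t : Involutive t) (ht : QuasiMeasurePreserving t μ μ) (hcomm : Function.Commute e t) :
    ∀ᵐ x ∂μ, (μ.map t).rnDeriv μ x * (μ.map e).rnDeriv μ (t x) =
      (μ.map e).rnDeriv μ x * (μ.map t).rnDeriv μ (e x) := by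
  have := sigmaFinite_map_of_involutive μ hinv_e he.measurable
  have := sigmaFinite_map_of_involutive μ hinv_t ht.measurable
  have het : (μ.map e).map t = (μ.map t).map e := by
    rw [Measure.map_map ht.measurable he.measurable, Measure.map_map he.measurable ht.measurable,
      hcomm.comp_eq]
  have h₁ := rnDeriv_map_of_involutive he.absolutelyContinuous hinv_t ht
  have h₂ := rnDeriv_map_of_involutive ht.absolutelyContinuous hinv_e he
  rw [het] at h₁
  filter_upwards [h₁, h₂] with x hx₁ hx₂
  rw [mul_comm, ← hx₁, hx₂, mul_comm]

lemma sqrtMapDensity_mul_comp (hinv : Involutive e) (he : QuasiMeasurePreserving e μ μ) :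
    ∀ᵐ x ∂μ, sqrtMapDensity μ e x * sqrtMapDensity μ e (e x) = 1 := by
  filter_upwards [rnDeriv_map_mul_rnDeriv_map_comp hinv he] with x hx
  rw [sqrtMapDensity, sqrtMapDensity, ← Real.sqrt_mul ENNReal.toReal_nonneg,
    ← ENNReal.toReal_mul, hx, ENNReal.toReal_one, Real.sqrt_one]

lemma sqrtMapDensity_mul_comm (hinv_e : Involutive e) (he : QuasiMeasurePreserving e μ μ)
    (hinv_t : Involutive t) (ht : QuasiMeasurePreserving t μ μ) (hcomm : Function.Commute e t) :
    ∀ᵐ x ∂μ, sqrtMapDensity μ t x * sqrtMapDensity μ e (t x) =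
      sqrtMapDensity μ e x * sqrtMapDensity μ t (e x) := by
  filter_upwards [rnDeriv_map_mul_comm hinv_e he hinv_t ht hcomm] with x hx
  simp only [sqrtMapDensity]
  rw [← Real.sqrt_mul ENNReal.toReal_nonneg, ← Real.sqrt_mul ENNReal.toReal_nonneg,
    ← ENNReal.toReal_mul, ← ENNReal.toReal_mul, hx]

lemma eLpNorm_sqrtMapDensity_mul_comp (hinv : Involutive e) (he : QuasiMeasurePreserving e μ μ)
    {g : α → ℂ} (hg : AEStronglyMeasurable g μ) :
    eLpNorm (fun x => (sqrtMapDensity μ e x : ℂ) * g (e x)) 2 μ = eLpNorm g 2 μ := by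
  simp only [eLpNorm_eq_lintegral_rpow_enorm_toReal two_ne_zero ENNReal.ofNat_ne_top,
    ENNReal.toReal_ofNat]
  congr 1
  have := sigmaFinite_map_of_involutive μ hinv he.measurable
  calc ∫⁻ x, ‖(sqrtMapDensity μ e x : ℂ) * g (e x)‖ₑ ^ (2 : ℝ) ∂μ
      = ∫⁻ x, (μ.map e).rnDeriv μ x * ‖g (e x)‖ₑ ^ (2 : ℝ) ∂μ := by
        refine lintegral_congr_ae ?_
        filter_upwards [Measure.rnDeriv_lt_top (μ.map e) μ] with x hx
        exact enorm_sqrtMapDensity_mul_rpow_two hx.ne _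
    _ = ∫⁻ x, ‖g (e x)‖ₑ ^ (2 : ℝ) ∂(μ.map e) :=
        lintegral_rnDeriv_mul he.absolutelyContinuous
          ((hg.comp_quasiMeasurePreserving he).enorm.pow_const _)
    _ = ∫⁻ x, ‖g x‖ₑ ^ (2 : ℝ) ∂μ := by
        rw [show μ.map e = μ.map (MeasurableEquiv.ofInvolutive e hinv he.measurable) from rfl,
          lintegral_map_equiv]
        simp only [MeasurableEquiv.ofInvolutive_apply, hinv _]

lemma memLp_sqrtMapDensity_mul_comp (hinv : Involutive e) (he : QuasiMeasurePreserving e μ μ)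
    {g : α → ℂ} (hg : MemLp g 2 μ) :
    MemLp (fun x => (sqrtMapDensity μ e x : ℂ) * g (e x)) 2 μ :=
  ⟨(Complex.measurable_ofReal.comp measurable_sqrtMapDensity).aestronglyMeasurable.mul
      (hg.1.comp_quasiMeasurePreserving he),
    by rw [eLpNorm_sqrtMapDensity_mul_comp hinv he hg.1]; exact hg.2⟩
lemma memLp_sqrtMapDensity_mul_conj_comp (hinv : Involutive e)
    (he : QuasiMeasurePreserving e μ μ) (f : Lp ℂ 2 μ) :
    MemLp (fun x => (sqrtMapDensity μ e x : ℂ) * conj (f (e x))) 2 μ :=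
  memLp_sqrtMapDensity_mul_comp hinv he (Lp.memLp f).star

def twistedConj (hinv : Involutive e) (he : QuasiMeasurePreserving e μ μ) :
    Lp ℂ 2 μ →ₗᵢ⋆[ℂ] Lp ℂ 2 μ where
  toFun f := (memLp_sqrtMapDensity_mul_conj_comp hinv he f).toLp _
  map_add' f g := by
    have hmem := memLp_sqrtMapDensity_mul_conj_comp hinv he
    refine Lp.ext ?_
    filter_upwards [(hmem (f + g)).coeFn_toLp, (hmem f).coeFn_toLp, (hmem g).coeFn_toLp,
      Lp.coeFn_add ((hmem f).toLp _) ((hmem g).toLp _), he.ae (Lp.coeFn_add f g)]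
      with x h h₁ h₂ hsum hadd
    rw [hsum, Pi.add_apply, h, h₁, h₂, hadd, Pi.add_apply, map_add, mul_add]
  map_smul' z f := by
    have hmem := memLp_sqrtMapDensity_mul_conj_comp hinv he
    refine Lp.ext ?_
    filter_upwards [(hmem (z • f)).coeFn_toLp, (hmem f).coeFn_toLp,
      Lp.coeFn_smul (conj z) ((hmem f).toLp _), he.ae (Lp.coeFn_smul z f)]
      with x h h₁ hsmul hz
    rw [hsmul, Pi.smul_apply, h, h₁, hz, Pi.smul_apply, smul_eq_mul, smul_eq_mul, map_mul]
    ring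
  norm_map' f := by
    rw [LinearMap.coe_mk, AddHom.coe_mk, Lp.norm_toLp, Lp.norm_def,
      eLpNorm_sqrtMapDensity_mul_comp hinv he (g := fun x => conj (f x))
        (Lp.aestronglyMeasurable f).star]
    exact congrArg ENNReal.toReal eLpNorm_star

lemma coeFn_twistedConj (hinv : Involutive e) (he : QuasiMeasurePreserving e μ μ)
    (f : Lp ℂ 2 μ) :
    twistedConj hinv he f =ᵐ[μ] fun x => (sqrtMapDensity μ e x : ℂ) * conj (f (e x)) :=
  (memLp_sqrtMapDensity_mul_conj_comp hinv he f).coeFn_toLp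

lemma twistedConj_twistedConj (hinv : Involutive e) (he : QuasiMeasurePreserving e μ μ)
    (f : Lp ℂ 2 μ) : twistedConj hinv he (twistedConj hinv he f) = f := by
  refine Lp.ext ?_
  filter_upwards [coeFn_twistedConj hinv he (twistedConj hinv he f),
    he.ae (coeFn_twistedConj hinv he f), sqrtMapDensity_mul_comp hinv he] with x h₁ h₂ hw
  rw [h₁, h₂, hinv x, map_mul, Complex.conj_ofReal, Complex.conj_conj, ← mul_assoc,
    ← Complex.ofReal_mul, hw, Complex.ofReal_one, one_mul]

lemma twistedConj_eq_self_iff (hinv : Involutive e) (he : QuasiMeasurePreserving e μ μ)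
    (f : Lp ℂ 2 μ) : twistedConj hinv he f = f ↔
      ∀ᵐ x ∂μ, conj (f x) = (sqrtMapDensity μ e x : ℂ) * f (e x) := by
  rw [Lp.ext_iff]
  refine (coeFn_twistedConj hinv he f).congr_left.trans (Filter.eventually_congr ?_)
  refine Filter.Eventually.of_forall fun x => ?_
  dsimp only
  rw [eq_comm, ← (starRingEnd ℂ).injective.eq_iff, map_mul, Complex.conj_ofReal,
    Complex.conj_conj]

lemma coeFn_twistedConj_of_ae_eq_mul (hinv : Involutive e) (he : QuasiMeasurePreserving e μ μ)
    {m : α → ℂ} (hm : ∀ᵐ x ∂μ, conj (m (e x)) = m x) {a b : Lp ℂ 2 μ}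
    (hab : a =ᵐ[μ] fun x => m x * b x) :
    twistedConj hinv he a =ᵐ[μ] fun x => m x * twistedConj hinv he b x := by
  filter_upwards [coeFn_twistedConj hinv he a, coeFn_twistedConj hinv he b, he.ae hab, hm]
    with x ha hb hab hm
  rw [ha, hb, hab, map_mul, hm]
  ring

lemma coeFn_twistedConj_of_ae_eq_weighted_comp (hinv_e : Involutive e)
    (he : QuasiMeasurePreserving e μ μ) (hinv_t : Involutive t)
    (ht : QuasiMeasurePreserving t μ μ) (hcomm : Function.Commute e t)
    {m : α → ℂ} (hm : ∀ᵐ x ∂μ, conj (m (e x)) = m x) {a b : Lp ℂ 2 μ}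
    (hab : a =ᵐ[μ] fun x => m x * sqrtMapDensity μ t x * b (t x)) :
    twistedConj hinv_e he a =ᵐ[μ]
      fun x => m x * sqrtMapDensity μ t x * twistedConj hinv_e he b (t x) := by
  filter_upwards [coeFn_twistedConj hinv_e he a, ht.ae (coeFn_twistedConj hinv_e he b),
    he.ae hab, hm, sqrtMapDensity_mul_comm hinv_e he hinv_t ht hcomm] with x ha hb hab hm hw
  rw [ha, hb, hab, hcomm x]
  have hw' : (sqrtMapDensity μ t x : ℂ) * sqrtMapDensity μ e (t x) =
      sqrtMapDensity μ e x * sqrtMapDensity μ t (e x) := by exact_mod_cast hw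
  simp only [map_mul, Complex.conj_ofReal, hm]
  linear_combination (-(m x * conj (b (t (e x))))) * hw'

end TwistedConjugation

section ConjLinearInvolution

variable {E : Type*} [AddCommGroup E] [Module ℂ E] {Θ : E →ₗ⋆[ℂ] E}

lemma eq_zero_of_apply_eq_self_of_eq_I_smul {f g : E} (hf : Θ f = f) (hg : Θ g = g)
    (hfg : f = Complex.I • g) : f = 0 := by
  have hneg : f = -f := calc
    f = Θ (Complex.I • g) := by rw [← hfg, hf]
    _ = -f := by rw [map_smulₛₗ, Complex.conj_I, hg, neg_smul, hfg]
  have htwo : (2 : ℂ) • f = 0 := by rw [two_smul]; nth_rewrite 2 [hneg]; exact add_neg_cancel f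
  exact (smul_eq_zero.mp htwo).resolve_left two_ne_zero

lemma exists_apply_eq_self_add_I_smul (hΘ : ∀ f, Θ (Θ f) = f) (f : E) :
    ∃ g, Θ g = g ∧ ∃ h, Θ h = h ∧ f = g + Complex.I • h := by
  refine ⟨(2⁻¹ : ℂ) • (f + Θ f), ?_, (2⁻¹ * -Complex.I : ℂ) • (f - Θ f), ?_, ?_⟩
  · rw [map_smulₛₗ, map_add, hΘ, add_comm, map_inv₀, map_ofNat]
  · rw [map_smulₛₗ, map_sub, hΘ, map_mul, map_inv₀, map_ofNat, map_neg, Complex.conj_I]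
    module
  · have hscalar : Complex.I * (2⁻¹ * -Complex.I) = 2⁻¹ := by
      linear_combination (-2⁻¹ : ℂ) * Complex.I_mul_I
    rw [smul_smul, hscalar]
    module

end ConjLinearInvolution

lemma gwFlip_involutive : Involutive gwFlip := fun x => funext fun i => sub_sub_cancel 1 (x i)

lemma measurable_gwFlip : Measurable gwFlip :=
  measurable_pi_lambda _ fun i => (measurable_of_countable _).comp (measurable_pi_apply i)

lemma add_gwDelta_involutive (k : ℕ) : Involutive (· + gwDelta k) := fun x => by
  have hchar : ∀ a b : ZMod 2, a + b + b = a := by decide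
  exact funext fun i => hchar (x i) (gwDelta k i)

lemma gwFlip_commute_add_gwDelta (k : ℕ) : Function.Commute gwFlip (· + gwDelta k) := fun x => by
  have hchar : ∀ a b : ZMod 2, 1 - (a + b) = 1 - a + b := by decide
  exact funext fun i => hchar (x i) (gwDelta k i)

lemma neg_one_pow_val_one_sub (a : ZMod 2) :
    (-1 : ℂ) ^ (1 - a).val = -(-1 : ℂ) ^ a.val := by
  obtain ⟨ha, ha'⟩ | ⟨ha, ha'⟩ :
      (a.val = 0 ∧ (1 - a).val = 1) ∨ (a.val = 1 ∧ (1 - a).val = 0) := by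
    revert a; decide
  all_goals simp [ha, ha']

lemma gwSign_eq_neg_prod (k : ℕ) (x : GWX) :
    gwSign k x = -∏ i ∈ Finset.range k, (-1 : ℂ) ^ (x i).val := by
  rw [gwSign, pow_succ, Finset.prod_pow_eq_pow_sum]
  ring

lemma gwSign_gwFlip (k : ℕ) (x : GWX) : gwSign k (gwFlip x) = (-1 : ℂ) ^ k * gwSign k x := by
  simp only [gwSign_eq_neg_prod, gwFlip, neg_one_pow_val_one_sub, Finset.prod_neg,
    Finset.card_range]
  ring

lemma conj_gwSign (k : ℕ) (x : GWX) : conj (gwSign k x) = gwSign k x := by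
  simp [gwSign]

section GWOperators

variable {μ : Measure GWX} [SigmaFinite μ]

lemma twistedConj_gwFlip_comm_J (hF : QuasiMeasurePreserving gwFlip μ μ) {k : ℕ}
    (hq : μ.map (· + gwDelta k) ≪ μ) {c : GWX → ℂ}
    (hc : ∀ᵐ x ∂μ, conj (c (gwFlip x)) = (-1 : ℂ) ^ (k + 1) * c x)
    {J : Lp ℂ 2 μ → Lp ℂ 2 μ}
    (hJ : ∀ f, J f =ᵐ[μ] fun x => gwSign k x * Complex.I * c x *
        (sqrtMapDensity μ (· + gwDelta k) x : ℂ) * f (x + gwDelta k))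
    (f : Lp ℂ 2 μ) :
    twistedConj gwFlip_involutive hF (J f) = J (twistedConj gwFlip_involutive hF f) := by
  refine Lp.ext ((coeFn_twistedConj_of_ae_eq_weighted_comp gwFlip_involutive hF
    (add_gwDelta_involutive k) ⟨measurable_add_const _, hq⟩ (gwFlip_commute_add_gwDelta k)
    (m := fun x => gwSign k x * Complex.I * c x) ?_ (hJ f)).trans (hJ _).symm)
  filter_upwards [hc] with x hx
  have hsign : (-1 : ℂ) ^ k * (-1) ^ (k + 1) = -1 := by
    rw [← pow_add]; exact Odd.neg_one_pow ⟨k, by ring⟩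
  simp only [map_mul, map_pow, map_neg, map_one, gwSign_gwFlip, conj_gwSign, Complex.conj_I, hx]
  linear_combination (-(gwSign k x * Complex.I * c x)) * hsign

lemma twistedConj_gwFlip_comm_J' (hF : QuasiMeasurePreserving gwFlip μ μ)
    {k : ℕ} {J J' : Lp ℂ 2 μ → Lp ℂ 2 μ}
    (hJ' : ∀ f, J' f =ᵐ[μ] fun x => (-1 : ℂ) ^ (x k).val * Complex.I * J f x)
    (hJ : ∀ f, twistedConj gwFlip_involutive hF (J f) = J (twistedConj gwFlip_involutive hF f))
    (f : Lp ℂ 2 μ) :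
    twistedConj gwFlip_involutive hF (J' f) = J' (twistedConj gwFlip_involutive hF f) := by
  have hm : ∀ᵐ x ∂μ, conj ((-1 : ℂ) ^ (gwFlip x k).val * Complex.I) =
      (-1 : ℂ) ^ (x k).val * Complex.I :=
    Filter.Eventually.of_forall fun x => by simp [gwFlip, neg_one_pow_val_one_sub]
  refine Lp.ext ((coeFn_twistedConj_of_ae_eq_mul gwFlip_involutive hF hm (hJ' f)).trans ?_)
  rw [hJ]
  exact (hJ' _).symm

end GWOperators

theorem gw_real_form_general
    (μ : Measure GWX) [SigmaFinite μ]
    (hq : ∀ k : ℕ, μ.map (· + gwDelta k) ≪ μ ∧ μ ≪ μ.map (· + gwDelta k))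
    (c : ℕ → GWX → ℂ)
    (J J' : ℕ → Lp ℂ 2 μ → Lp ℂ 2 μ)
    (hJ : ∀ k f, (↑(J k f) : GWX → ℂ) =ᵐ[μ] fun x =>
      gwSign k x * Complex.I * c k x *
        (Real.sqrt (((μ.map (· + gwDelta k)).rnDeriv μ x).toReal) : ℂ) *
        (↑f : GWX → ℂ) (x + gwDelta k))
    (hJ' : ∀ k f, (↑(J' k f) : GWX → ℂ) =ᵐ[μ] fun x =>
      (-1 : ℂ) ^ (x k).val * Complex.I * (↑(J k f) : GWX → ℂ) x)
    (hflip : μ.map gwFlip ≪ μ ∧ μ ≪ μ.map gwFlip)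
    (hc4 : ∀ k : ℕ, ∀ᵐ x ∂μ,
      (starRingEnd ℂ) (c k (gwFlip x)) = (-1 : ℂ) ^ (k + 1) * c k x)
    (HR : Set (Lp ℂ 2 μ))
    (hHR : HR = {f : Lp ℂ 2 μ | ∀ᵐ x ∂μ,
      (starRingEnd ℂ) ((↑f : GWX → ℂ) x) =
        (Real.sqrt (((μ.map gwFlip).rnDeriv μ x).toReal) : ℂ) *
          (↑f : GWX → ℂ) (gwFlip x)}) :
    IsClosed HR ∧
    (0 : Lp ℂ 2 μ) ∈ HR ∧
    (∀ f ∈ HR, ∀ g ∈ HR, f + g ∈ HR) ∧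
    (∀ (r : ℝ), ∀ f ∈ HR, r • f ∈ HR) ∧
    (∀ k : ℕ, ∀ f ∈ HR, J k f ∈ HR ∧ J' k f ∈ HR) ∧
    (∀ f ∈ HR, (∃ g ∈ HR, f = Complex.I • g) → f = 0) ∧
    (∀ f : Lp ℂ 2 μ, ∃ g ∈ HR, ∃ h ∈ HR, f = g + Complex.I • h) := by
  have hF : QuasiMeasurePreserving gwFlip μ μ := ⟨measurable_gwFlip, hflip.1⟩
  set Θ := twistedConj gwFlip_involutive hF
  have hΘJ : ∀ k f, Θ (J k f) = J k (Θ f) := fun k =>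
    twistedConj_gwFlip_comm_J hF (hq k).1 (hc4 k) (hJ k)
  have hΘJ' : ∀ k f, Θ (J' k f) = J' k (Θ f) := fun k =>
    twistedConj_gwFlip_comm_J' hF (hJ' k) (hΘJ k)
  have hHR' : HR = {f | Θ f = f} := by
    rw [hHR]; ext f; exact (twistedConj_eq_self_iff gwFlip_involutive hF f).symm
  rw [hHR']
  refine ⟨isClosed_eq Θ.continuous continuous_id, map_zero Θ, fun f hf g hg => ?_,
    fun r f hf => ?_, fun k f hf => ⟨?_, ?_⟩, fun f hf ⟨g, hg, hfg⟩ => ?_, fun f => ?_⟩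
  · rw [Set.mem_ofPred_eq, map_add, hf, hg]
  · rw [RCLike.real_smul_eq_coe_smul (K := ℂ), Set.mem_ofPred_eq, map_smulₛₗ,
      RCLike.conj_ofReal, hf]
  · rw [Set.mem_ofPred_eq, hΘJ, hf]
  · rw [Set.mem_ofPred_eq, hΘJ', hf]
  · exact eq_zero_of_apply_eq_self_of_eq_I_smul (Θ := Θ.toLinearMap) hf hg hfg
  · exact exists_apply_eq_self_add_I_smul (Θ := Θ.toLinearMap)
      (twistedConj_twistedConj gwFlip_involutive hF) f

/-- for scalar Gårding–Wightman data `(μ, (c_k))` with `μ̃ = (x ↦ 1-x)_* μ`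
mutually absolutely continuous with `μ` and `conj(c_k(1-x)) = (-1)^k c_k(x)` a.e. (here
`(-1)^(k+1)`, for the paper's index `k+1`), the set
`H^ℝ = {f : conj(f(x)) = √((dμ̃/dμ)(x)) f(1-x) a.e.}` is a closed real subspace of
`L²(X, μ; ℂ)`, invariant under every `J_k` and `J'_k`, with `H^ℝ ∩ i H^ℝ = {0}` and
`L² = H^ℝ + i H^ℝ`: an invariant real form. -/
theorem gw_real_form
    (μ : Measure GWX) [SigmaFinite μ]
    (hq : ∀ k : ℕ, μ.map (· + gwDelta k) ≪ μ ∧ μ ≪ μ.map (· + gwDelta k))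
    (c : ℕ → GWX → ℂ)
    (hcm : ∀ k, Measurable (c k))
    (hc1 : ∀ k, ∀ᵐ x ∂μ, ‖c k x‖ = 1)
    (hc2 : ∀ k, ∀ᵐ x ∂μ, (starRingEnd ℂ) (c k x) = c k (x + gwDelta k))
    (hc3 : ∀ k l, ∀ᵐ x ∂μ, c k x * c l (x + gwDelta k) = c l x * c k (x + gwDelta l))
    (J J' : ℕ → Lp ℂ 2 μ → Lp ℂ 2 μ)
    (hJ : ∀ k f, (↑(J k f) : GWX → ℂ) =ᵐ[μ] fun x =>
      gwSign k x * Complex.I * c k x *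
        (Real.sqrt (((μ.map (· + gwDelta k)).rnDeriv μ x).toReal) : ℂ) *
        (↑f : GWX → ℂ) (x + gwDelta k))
    (hJ' : ∀ k f, (↑(J' k f) : GWX → ℂ) =ᵐ[μ] fun x =>
      (-1 : ℂ) ^ (x k).val * Complex.I * (↑(J k f) : GWX → ℂ) x)
    (hflip : μ.map gwFlip ≪ μ ∧ μ ≪ μ.map gwFlip)
    (hc4 : ∀ k : ℕ, ∀ᵐ x ∂μ,
      (starRingEnd ℂ) (c k (gwFlip x)) = (-1 : ℂ) ^ (k + 1) * c k x)
    (HR : Set (Lp ℂ 2 μ))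
    (hHR : HR = {f : Lp ℂ 2 μ | ∀ᵐ x ∂μ,
      (starRingEnd ℂ) ((↑f : GWX → ℂ) x) =
        (Real.sqrt (((μ.map gwFlip).rnDeriv μ x).toReal) : ℂ) *
          (↑f : GWX → ℂ) (gwFlip x)}) :
    IsClosed HR ∧
    (0 : Lp ℂ 2 μ) ∈ HR ∧
    (∀ f ∈ HR, ∀ g ∈ HR, f + g ∈ HR) ∧
    (∀ (r : ℝ), ∀ f ∈ HR, r • f ∈ HR) ∧
    (∀ k : ℕ, ∀ f ∈ HR, J k f ∈ HR ∧ J' k f ∈ HR) ∧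
    (∀ f ∈ HR, (∃ g ∈ HR, f = Complex.I • g) → f = 0) ∧
    (∀ f : Lp ℂ 2 μ, ∃ g ∈ HR, ∃ h ∈ HR, f = g + Complex.I • h) :=
  gw_real_form_general μ hq c J J' hJ hJ' hflip hc4 HR hHR
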